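/- arXiv:1610.03163 — 4 statements merged into one kernel-verified Lean document; each statement's English description precedes it below -/
import Mathlib

section
/- Let Y be an aperiodic subshift over a finite alphabet. Then for every natural number n ≥ 1, the repetitive function satisfies R(n) > n · Q(n), where Q(n) is the maximal power exponent among words of length n. -/
open Filter ENNReal

/-- The left shift on infinite words. -/
def shft {A : Type*} (y : ℕ → A) : ℕ → A := fun n => y (n + 1)

/-- `w` occurs as a factor of the infinite word `y`. -/
def FactorOf {A : Type*} (w : List A) (y : ℕ → A) : Prop :=
  ∃ k, w = (List.range w.length).map fun i => y (k + i)

/-- The language of a subshift `Y`: all finite factors of elements of `Y`. -/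
def LangOf {A : Type*} (Y : Set (ℕ → A)) : Set (List A) :=
  {w | ∃ y ∈ Y, FactorOf w y}

/-- The language of an infinite word `x`: all finite factors of `x`
(equals the language of the subshift `Ω(x)` generated by `x`). -/
def LangX {A : Type*} (x : ℕ → A) : Set (List A) :=
  {w | FactorOf w x}

/-- A subshift: a closed, shift-invariant set of infinite words. -/
def IsSubshift {A : Type*} [TopologicalSpace A] (Y : Set (ℕ → A)) : Prop :=
  IsClosed Y ∧ shft '' Y = Y

/-- The subshift generated by an infinite word `x`: the closure of its shift orbit. -/
def OmegaOf {A : Type*} [TopologicalSpace A] (x : ℕ → A) : Set (ℕ → A) :=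
  closure {y | ∃ k, y = shft^[k] x}

/-- `Y` is aperiodic: it contains no periodic point. -/
def Aperiodic {A : Type*} (Y : Set (ℕ → A)) : Prop :=
  ¬ ∃ y ∈ Y, ∃ k, 0 < k ∧ shft^[k] y = y

/-- `Q(n)`: the supremum of the powers `p` such that some word `W` of length `n`
in the language `L` has `W^p ∈ L`. -/
noncomputable def QfunL {A : Type*} (L : Set (List A)) (n : ℕ) : ℕ∞ :=
  sSup ((fun q : ℕ => (q : ℕ∞)) ''
    {q | ∃ W ∈ L, W.length = n ∧ (List.replicate q W).flatten ∈ L})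

/-- The repetitive function `R(n)`: the smallest `r'` such that every word of
length `r'` in `L` contains all words of `L` of length `n` as factors
(`⊤` if no such `r'` exists). -/
noncomputable def RfunL {A : Type*} (L : Set (List A)) (n : ℕ) : ℕ∞ :=
  sInf ((fun r : ℕ => (r : ℕ∞)) ''
    {r' | ∀ u ∈ L, u.length = r' → ∀ v ∈ L, v.length = n → v <:+: u})

/-- `Q_α = limsup Q(n)/n^(α-1)`. -/
noncomputable def Qalpha {A : Type*} (L : Set (List A)) (α : ℝ) : ℝ≥0∞ :=
  Filter.atTop.limsup fun n : ℕ => (QfunL L n : ℝ≥0∞) / (n : ℝ≥0∞) ^ (α - 1)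

/-- `R_α = limsup R(n)/n^α`. -/
noncomputable def Ralpha {A : Type*} (L : Set (List A)) (α : ℝ) : ℝ≥0∞ :=
  Filter.atTop.limsup fun n : ℕ => (RfunL L n : ℝ≥0∞) / (n : ℝ≥0∞) ^ α

/-- `A_{α,n}`: the infimum of `(|W|-|w|)/|w|^(1/α)` over `w, W` in the language with
`w` a proper nonempty prefix and suffix of `W` and `|W| = n`. -/
noncomputable def AfunL {A : Type*} (L : Set (List A)) (α : ℝ) (n : ℕ) : ℝ≥0∞ :=
  sInf {t | ∃ w W : List A, w ∈ L ∧ W ∈ L ∧ w ≠ [] ∧ w ≠ W ∧ w <+: W ∧ w <:+ W ∧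
    W.length = n ∧ t = ((W.length - w.length : ℕ) : ℝ≥0∞) / (w.length : ℝ≥0∞) ^ (1 / α)}

/-- `ℓ_α = liminf_n A_{α,n}`. -/
noncomputable def lalpha {A : Type*} (L : Set (List A)) (α : ℝ) : ℝ≥0∞ :=
  Filter.atTop.liminf (AfunL L α)

/-- `ℓ`: the repulsiveness constant (no restriction on `|W|`). -/
noncomputable def lconst {A : Type*} (L : Set (List A)) : ℝ≥0∞ :=
  sInf {t | ∃ w W : List A, w ∈ L ∧ W ∈ L ∧ w ≠ [] ∧ w ≠ W ∧ w <+: W ∧ w <:+ W ∧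
    t = ((W.length - w.length : ℕ) : ℝ≥0∞) / (w.length : ℝ≥0∞)}

lemma shft_iter_apply {A : Type*} (y : ℕ → A) (k i : ℕ) : (shft^[k] y) i = y (i + k) := by
  induction k generalizing y i with
  | zero => rfl
  | succ k ih =>
    rw [Function.iterate_succ_apply, ih (shft y) i]
    show y (i + k + 1) = _
    ring_nf

lemma mem_of_iter {A : Type*} {Y : Set (ℕ → A)} (hinv : shft '' Y = Y) {y : ℕ → A}
    (hy : y ∈ Y) (k : ℕ) : shft^[k] y ∈ Y := by
  induction k with
  | zero => exact hy
  | succ k ih =>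
    rw [Function.iterate_succ_apply']
    rw [← hinv]
    exact ⟨_, ih, rfl⟩

lemma lang_infix_closed {A : Type*} {Y : Set (ℕ → A)} {w W : List A}
    (h : w <:+: W) (hW : W ∈ LangOf Y) : w ∈ LangOf Y := by
  obtain ⟨y, hyY, k, hk⟩ := hW
  obtain ⟨s, t, hst⟩ := h
  refine ⟨y, hyY, k + s.length, ?_⟩
  apply List.ext_getElem (by simp)
  intro j h1 h2
  simp only [List.getElem_map, List.getElem_range]
  have hj : s.length + j < W.length := by
    rw [← hst]; simp only [List.length_append]; omega
  have e1 : W[s.length + j]'hj = w[j]'h1 := by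
    rw [List.getElem_of_eq hst.symm hj]
    rw [List.getElem_append_left (by simp; omega)]
    rw [List.getElem_append_right (by simp)]
    congr 1
    simp
  have e2 : W[s.length + j]'hj = y (k + (s.length + j)) := by
    rw [List.getElem_of_eq hk hj]
    simp
  rw [← e1, e2]
  ring_nf

lemma flatten_replicate_length {A : Type*} (q : ℕ) (W : List A) :
    ((List.replicate q W).flatten).length = q * W.length := by
  induction q with
  | zero => simp
  | succ q ih => simp [List.replicate_succ, ih, Nat.succ_mul]; ring

lemma flatten_replicate_getElem {A : Type*} (q : ℕ) (W : List A) (hW : 0 < W.length)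
    (i : ℕ) (h : i < ((List.replicate q W).flatten).length) :
    ((List.replicate q W).flatten)[i] = W[i % W.length]'(Nat.mod_lt _ hW) := by
  induction q generalizing i with
  | zero => simp at h
  | succ q ih =>
    rw [flatten_replicate_length] at h
    have e : (List.replicate (q+1) W).flatten = W ++ (List.replicate q W).flatten := by
      rw [List.replicate_succ, List.flatten_cons]
    rw [List.getElem_of_eq e]
    by_cases hi : i < W.length
    · rw [List.getElem_append_left hi]
      congr 1
      exact (Nat.mod_eq_of_lt hi).symm
    · push_neg at hi
      rw [List.getElem_append_right hi]
      have hq : (q+1) * W.length = q * W.length + W.length := by ring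
      rw [ih (i - W.length) (by rw [flatten_replicate_length]; omega)]
      congr 1
      rw [Nat.mod_eq_sub_mod hi]

lemma pow_prefix {A : Type*} (W : List A) {m q : ℕ} (h : m ≤ q) :
    (List.replicate m W).flatten <+: (List.replicate q W).flatten := by
  refine ⟨(List.replicate (q - m) W).flatten, ?_⟩
  rw [← List.flatten_append, ← List.replicate_add]
  congr 2
  omega

lemma periodic_of_all_pows {A : Type*} [TopologicalSpace A] [DiscreteTopology A]
    {Y : Set (ℕ → A)} (hclosed : IsClosed Y) (hinv : shft '' Y = Y) {W : List A}
    (hpos : 0 < W.length)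
    (hall : ∀ m : ℕ, (List.replicate m W).flatten ∈ LangOf Y) :
    ∃ y ∈ Y, shft^[W.length] y = y := by
  set n := W.length with hn
  set y : ℕ → A := fun i => W[i % n]'(Nat.mod_lt _ hpos) with hy
  have hz : ∀ m : ℕ, ∃ z ∈ Y, ∀ i < m, z i = y i := by
    intro m
    obtain ⟨x, hxY, k, hk⟩ := hall m
    refine ⟨shft^[k] x, mem_of_iter hinv hxY k, ?_⟩
    intro i him
    have hilen : i < ((List.replicate m W).flatten).length := by
      rw [flatten_replicate_length]
      calc i < m := him
        _ ≤ m * n := Nat.le_mul_of_pos_right _ hpos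
    have e1 : ((List.replicate m W).flatten)[i] = x (k + i) := by
      rw [List.getElem_of_eq hk hilen]
      simp
    have e2 : ((List.replicate m W).flatten)[i] = y i :=
      flatten_replicate_getElem m W hpos i hilen
    rw [shft_iter_apply, ← e2, e1, Nat.add_comm]
  choose z hzY hzy using hz
  have htend : Filter.Tendsto z Filter.atTop (nhds y) := by
    rw [tendsto_pi_nhds]
    intro i
    have hev : ∀ᶠ m in Filter.atTop, z m i = y i :=
      Filter.eventually_atTop.2 ⟨i + 1, fun m hm => hzy m i (by omega)⟩
    exact Filter.Tendsto.congr' (hev.mono fun m h => h.symm) tendsto_const_nhds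
  refine ⟨y, hclosed.mem_of_tendsto htend (Filter.Eventually.of_forall hzY), ?_⟩
  funext i
  rw [shft_iter_apply]
  show W[(i + n) % n]'_ = W[i % n]'_
  congr 1
  exact Nat.add_mod_right i n

/-- Proposition 3.4: For an aperiodic subshift `Y` over a finite
alphabet, `R(n) > n · Q(n)` for all `n ≥ 1`.  (One may use the standard fact that
the complexity function of an aperiodic subshift satisfies `p(n) > n`.) -/
theorem aperiodic_repetitive_gt_mul_power
    {A : Type*} [Finite A] [TopologicalSpace A] [DiscreteTopology A]
    (Y : Set (ℕ → A)) (hY : IsSubshift Y) (hap : Aperiodic Y)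
    (hcomplexity : ∀ n : ℕ, 1 ≤ n → n < {w | w ∈ LangOf Y ∧ w.length = n}.ncard) :
    ∀ n : ℕ, 1 ≤ n → (n : ℕ∞) * QfunL (LangOf Y) n < RfunL (LangOf Y) n := by
  
  intro n hn
  have npos : 0 < n := hn
  set L := LangOf Y with hL
  have hF := hcomplexity n hn
  -- the set of powers is bounded for each fixed word W
  have hbW : ∀ W : List A, ∃ B : ℕ, W.length = n →
      ∀ q, (List.replicate q W).flatten ∈ L → q ≤ B := by
    intro W
    by_contra hc
    push_neg at hc
    have hall : ∀ m : ℕ, (List.replicate m W).flatten ∈ L := by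
      intro m
      obtain ⟨hlen, q, hq, hmq⟩ := hc m
      exact lang_infix_closed (pow_prefix W (le_of_lt hmq)).isInfix hq
    obtain ⟨hlen, _, _, _⟩ := hc 0
    have hpos : 0 < W.length := by omega
    obtain ⟨y, hyY, hyper⟩ := periodic_of_all_pows hY.1 hY.2 hpos hall
    exact hap ⟨y, hyY, W.length, hpos, hyper⟩
  choose f hf using hbW
  have hWfin : {W : List A | W.length = n}.Finite := List.finite_length_eq A n
  set B := hWfin.toFinset.sup f with hB
  set S := {q | ∃ W ∈ L, W.length = n ∧ (List.replicate q W).flatten ∈ L} with hS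
  have hSB : ∀ q ∈ S, q ≤ B := by
    rintro q ⟨W, hWL, hWlen, hWq⟩
    exact le_trans (hf W hWlen q hWq) (Finset.le_sup (by simp [hWfin.mem_toFinset, hWlen]))
  -- S is nonempty
  have hFne : {w | w ∈ L ∧ w.length = n}.Nonempty := by
    apply Set.nonempty_of_ncard_ne_zero
    omega
  obtain ⟨W₀, hW₀L, hW₀len⟩ := hFne
  have h0S : 0 ∈ S := ⟨W₀, hW₀L, hW₀len, by
    simpa using lang_infix_closed (List.nil_infix (l := W₀)) hW₀L⟩
  set qm := sSup S with hqm
  have hqmS : qm ∈ S := Nat.sSup_mem ⟨0, h0S⟩ ⟨B, hSB⟩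
  have hQ : QfunL L n = (qm : ℕ∞) := by
    apply le_antisymm
    · apply sSup_le
      rintro x ⟨q, hq, rfl⟩
      show (q : ℕ∞) ≤ (qm : ℕ∞)
      exact_mod_cast le_csSup ⟨B, hSB⟩ hq
    · exact le_sSup ⟨qm, hqmS, rfl⟩
  -- key counting bound
  have hR : ∀ r' : ℕ, (∀ u ∈ L, u.length = r' → ∀ v ∈ L, v.length = n → v <:+: u) →
      n * qm < r' := by
    intro r' hr'
    by_contra hle
    push_neg at hle
    obtain ⟨W, hWL, hWlen, hWq⟩ := hqmS
    set P := (List.replicate qm W).flatten with hP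
    have hPlen : P.length = qm * n := by rw [hP, flatten_replicate_length, hWlen]
    set u := P.take r' with hu
    have huL : u ∈ L := lang_infix_closed (List.take_prefix r' P).isInfix hWq
    have hulen : u.length = r' := by
      rw [hu, List.length_take, hPlen]
      have : qm * n = n * qm := Nat.mul_comm _ _
      omega
    have hall := hr' u huL hulen
    -- every length-n word of L is an infix of P
    have hinf : ∀ v ∈ L, v.length = n → v <:+: P := fun v hv hvl =>
      (hall v hv hvl).trans (List.take_prefix r' P).isInfix
    -- injection into residues mod n
    have key : ∀ v : List A, ∃ m : ℕ, m < n ∧ (v ∈ L ∧ v.length = n →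
        ∀ (j : ℕ) (h1 : j < v.length) (h2 : (m + j) % n < W.length),
          v[j] = W[(m + j) % n]) := by
      intro v
      by_cases hv : v ∈ L ∧ v.length = n
      · obtain ⟨s, t, hst⟩ := hinf v hv.1 hv.2
        refine ⟨s.length % n, Nat.mod_lt _ npos, fun _ j h1 h2 => ?_⟩
        have hjP : s.length + j < P.length := by
          rw [← hst]
          simp only [List.length_append]
          omega
        have e1 : P[s.length + j]'hjP = v[j]'h1 := by
          rw [List.getElem_of_eq hst.symm hjP]
          rw [List.getElem_append_left (by simp; omega)]
          rw [List.getElem_append_right (by simp)]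
          congr 1
          simp
        have e2 : P[s.length + j]'hjP = W[(s.length + j) % W.length]'(Nat.mod_lt _ (by omega)) :=
          flatten_replicate_getElem qm W (by omega) _ hjP
        rw [← e1, e2]
        congr 1
        rw [hWlen]
        conv_lhs => rw [Nat.add_mod]
        conv_rhs => rw [Nat.add_mod]
        rw [Nat.mod_mod_of_dvd _ dvd_rfl]
      · exact ⟨0, npos, fun h => absurd h hv⟩
    choose g hg1 hg2 using key
    have hcard : {w | w ∈ L ∧ w.length = n}.ncard ≤ n := by
      have h1 : {w | w ∈ L ∧ w.length = n}.ncard ≤ (Set.Iio n).ncard := by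
        refine Set.ncard_le_ncard_of_injOn g (fun v hv => hg1 v) ?_ (Set.finite_Iio n)
        intro v hv v' hv' hgv
        apply List.ext_getElem (by rw [hv.2, hv'.2])
        intro j h1 h2
        have hb' : (g v' + j) % n < W.length := by rw [hWlen]; exact Nat.mod_lt _ npos
        rw [hg2 v hv j h1 (by rw [hgv]; exact hb'), hg2 v' hv' j h2 hb']
        simp only [hgv]
      rwa [show (Set.Iio n).ncard = n by
        have e : (Set.Iio n) = {i : ℕ | i < n} := rfl
        rw [e, Set.ncard, Set.Nat.encard_range n]; simp] at h1
    omega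
  rw [hQ]
  have hfin : ((n * qm : ℕ) : ℕ∞) < RfunL L n := by
    refine lt_of_lt_of_le (b := ((n * qm + 1 : ℕ) : ℕ∞)) (by exact_mod_cast Nat.lt_succ_self _) ?_
    apply le_sInf
    rintro x ⟨r', hr', rfl⟩
    show ((n * qm + 1 : ℕ) : ℕ∞) ≤ (r' : ℕ∞)
    exact_mod_cast hR r' hr'
  calc (n : ℕ∞) * (qm : ℕ∞) = ((n * qm : ℕ) : ℕ∞) := by exact_mod_cast rfl
    _ < RfunL L n := hfin
end

section
/- Let x be an infinite word over a finite alphabet and let α ≥ 1. If the subshift Ω(x) is α-repulsive (i.e., ℓ_α is finite and nonzero), then Q_α := limsup_{n→∞} Q(n)/n^{α−1} < ∞. -/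
open Filter ENNReal

/-!
If `W^q` is a factor of `x` with `|W| = n`, then `W^(q-1)` is a proper prefix and suffix of it,
so `A_{α,qn} ≤ n / ((q-1)n)^(1/α)`. Once `A_{α,m} > c > 0` for all large `m`, this forces
`c^α (q-1) < n^(α-1)`, hence `Q(n) = O(n^(α-1))`.
-/

section
variable {A : Type*}

theorem mem_langX_of_isPrefix {x : ℕ → A} {u w : List A} (hw : w ∈ LangX x) (h : u <+: w) :
    u ∈ LangX x := by
  obtain ⟨k, hk⟩ := hw
  refine ⟨k, ?_⟩
  conv_lhs => rw [List.prefix_iff_eq_take.mp h, hk]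
  rw [← List.map_take, List.take_range, min_eq_left h.length_le]

theorem flatten_replicate_prefix_succ (W : List A) (p : ℕ) :
    (List.replicate p W).flatten <+: (List.replicate (p + 1) W).flatten :=
  ⟨W, by rw [List.replicate_succ', List.flatten_append]; simp⟩

theorem flatten_replicate_suffix_succ (W : List A) (p : ℕ) :
    (List.replicate p W).flatten <:+ (List.replicate (p + 1) W).flatten :=
  ⟨W, by rw [List.replicate_succ, List.flatten_cons]⟩

theorem AfunL_le_of_replicate_mem {L : Set (List A)} (α : ℝ) {W : List A} {p : ℕ}
    (hp : p ≠ 0) (hW : W ≠ []) (hmem : (List.replicate p W).flatten ∈ L)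
    (hsucc : (List.replicate (p + 1) W).flatten ∈ L) :
    AfunL L α ((p + 1) * W.length) ≤
      W.length / ((p * W.length : ℕ) : ℝ≥0∞) ^ (1 / α) := by
  have hlen : ∀ q, ((List.replicate q W).flatten).length = q * W.length := by
    simp [List.length_flatten]
  have hpos : 0 < W.length := List.length_pos_iff.mpr hW
  refine sInf_le ⟨_, _, hmem, hsucc, ?_, ?_, ?_, ?_, hlen _, ?_⟩
  · exact List.ne_nil_of_length_pos (by rw [hlen]; positivity)
  · intro h
    have := congrArg List.length h
    rw [hlen, hlen] at this
    nlinarith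
  · exact flatten_replicate_prefix_succ W p
  · exact flatten_replicate_suffix_succ W p
  · rw [hlen, hlen, add_mul, one_mul, Nat.add_sub_cancel_left]

theorem rpow_mul_lt_of_lt_div_rpow {α : ℝ} (hα : 0 < α) {c : ℝ≥0∞} {n p : ℕ} (hn : n ≠ 0)
    (hp : p ≠ 0) (h : c < n / ((p * n : ℕ) : ℝ≥0∞) ^ (1 / α)) :
    c ^ α * p < (n : ℝ≥0∞) ^ (α - 1) := by
  have hn' : (n : ℝ≥0∞) ≠ 0 := by exact_mod_cast hn
  have hpn : ((p * n : ℕ) : ℝ≥0∞) ≠ 0 := by positivity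
  rw [ENNReal.lt_div_iff_mul_lt
    (Or.inl (ENNReal.rpow_pos (pos_iff_ne_zero.2 hpn) (natCast_ne_top _)).ne')
    (Or.inl (ENNReal.rpow_ne_top_of_nonneg (by positivity) (natCast_ne_top _)))] at h
  have h' := ENNReal.rpow_lt_rpow h hα
  rw [ENNReal.mul_rpow_of_nonneg _ _ hα.le, one_div, ENNReal.rpow_inv_rpow hα.ne'] at h'
  rw [ENNReal.rpow_sub _ _ hn' (natCast_ne_top n), ENNReal.rpow_one,
    ENNReal.lt_div_iff_mul_lt (Or.inl hn') (Or.inl (natCast_ne_top n))]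
  simpa [mul_assoc] using h'

theorem coe_QfunL_le {L : Set (List A)} {n : ℕ} {B : ℝ≥0∞}
    (h : ∀ W q, W.length = n → (List.replicate q W).flatten ∈ L → (q : ℝ≥0∞) ≤ B) :
    (QfunL L n : ℝ≥0∞) ≤ B := by
  rw [QfunL, sSup_image, ENat.toENNReal_iSup]
  refine iSup_le fun q => ?_
  rw [ENat.toENNReal_iSup]
  exact iSup_le fun ⟨W, _, hWn, hq⟩ => by simpa using h W q hWn hq

theorem natCast_le_of_replicate_mem_langX {x : ℕ → A} {α : ℝ} (hα : 1 ≤ α) {c : NNReal}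
    (hc : c ≠ 0) {N : ℕ} (hN : ∀ m ≥ N, (c : ℝ≥0∞) < AfunL (LangX x) α m) {W : List A}
    (hW : W ≠ []) {q : ℕ} (hq : (List.replicate q W).flatten ∈ LangX x) :
    (q : ℝ≥0∞) ≤ (N + 1 + ((c : ℝ≥0∞) ^ α)⁻¹) * (W.length : ℝ≥0∞) ^ (α - 1) := by
  have hpos : 0 < W.length := List.length_pos_iff.mpr hW
  have hd : 1 ≤ (W.length : ℝ≥0∞) ^ (α - 1) := by
    rcases hα.eq_or_lt with rfl | hα'
    · simp
    · exact ENNReal.one_le_rpow (by exact_mod_cast hpos) (by linarith)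
  rcases le_or_gt q (N + 1) with hqN | hqN
  · calc (q : ℝ≥0∞) ≤ N + 1 := by exact_mod_cast hqN
      _ ≤ N + 1 + ((c : ℝ≥0∞) ^ α)⁻¹ := le_self_add
      _ ≤ _ := le_mul_of_one_le_right' hd
  obtain ⟨p, rfl⟩ := Nat.exists_eq_add_of_lt hqN
  have hp : N + 1 + p ≠ 0 := by omega
  have hcA : (c : ℝ≥0∞) < W.length / (((N + 1 + p) * W.length : ℕ) : ℝ≥0∞) ^ (1 / α) :=
    (hN _ (by nlinarith)).trans_le <| AfunL_le_of_replicate_mem α hp hW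
      (mem_langX_of_isPrefix hq (flatten_replicate_prefix_succ W _)) hq
  have hca : (c : ℝ≥0∞) ^ α ≠ 0 := by positivity
  have hle : ((N + 1 + p : ℕ) : ℝ≥0∞) ≤ (W.length : ℝ≥0∞) ^ (α - 1) / (c : ℝ≥0∞) ^ α := by
    rw [ENNReal.le_div_iff_mul_le (Or.inl hca)
      (Or.inl (ENNReal.rpow_ne_top_of_nonneg (by linarith) coe_ne_top)), mul_comm]
    exact (rpow_mul_lt_of_lt_div_rpow (by linarith) hpos.ne' hp hcA).le
  calc ((N + 1 + p + 1 : ℕ) : ℝ≥0∞) = (N + 1 + p : ℕ) + 1 := by push_cast; rfl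
    _ ≤ (W.length : ℝ≥0∞) ^ (α - 1) / (c : ℝ≥0∞) ^ α + (N + 1) * (W.length : ℝ≥0∞) ^ (α - 1) :=
      add_le_add hle (one_le_mul_of_one_le_of_one_le le_add_self hd)
    _ = _ := by rw [div_eq_mul_inv]; ring
end

theorem Qalpha_lt_top_of_repulsive_general
    {A : Type*} (x : ℕ → A) (α : ℝ) (hα : 1 ≤ α)
    (hrep : lalpha (LangX x) α ≠ 0 ∧ lalpha (LangX x) α ≠ ⊤) :
    Qalpha (LangX x) α ≠ ⊤ := by
  obtain ⟨c, hc, hcl⟩ := ENNReal.lt_iff_exists_nnreal_btwn.mp (pos_iff_ne_zero.mpr hrep.1)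
  obtain ⟨N, hN⟩ := eventually_atTop.mp (eventually_lt_of_lt_liminf hcl)
  have hc0 : c ≠ 0 := by exact_mod_cast hc.ne'
  refine ne_top_of_le_ne_top (b := N + 1 + ((c : ℝ≥0∞) ^ α)⁻¹) (by simp [hc0]) ?_
  refine limsup_le_of_le (by isBoundedDefault) (eventually_atTop.mpr ⟨1, fun n hn => ?_⟩)
  refine ENNReal.div_le_of_le_mul (coe_QfunL_le fun W q hWn hq => ?_)
  subst hWn
  exact natCast_le_of_replicate_mem_langX hα hc0 hN
    (List.ne_nil_of_length_pos hn) hq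

/-- If `Ω(x)` is `α`-repulsive (`0 < ℓ_α < ∞`) for `α ≥ 1`, then
`Q_α = limsup Q(n)/n^(α-1) < ∞`. -/
theorem Qalpha_lt_top_of_repulsive
    {A : Type*} [Finite A] (x : ℕ → A) (α : ℝ) (hα : 1 ≤ α)
    (hrep : lalpha (LangX x) α ≠ 0 ∧ lalpha (LangX x) α ≠ ⊤) :
    Qalpha (LangX x) α ≠ ⊤ :=
  Qalpha_lt_top_of_repulsive_general x α hα hrep
end

section
/- Let x be an infinite word over a finite alphabet and α ≥ 1. If Ω(x) is α-repulsive (0 < ℓ_α < ∞), then Q_α := limsup_{n→∞} Q(n)/n^{α−1} > 0. -/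
open Filter ENNReal

lemma langX_infix {A : Type*} {x : ℕ → A} {u w : List A} (hw : w ∈ LangX x)
    (hu : u <:+: w) : u ∈ LangX x := by
  obtain ⟨k, hk⟩ := hw
  obtain ⟨s, t, hst⟩ := hu
  subst hst
  refine ⟨k + s.length, ?_⟩
  have hw' : ∀ j (hj : j < (s++u++t).length), (s++u++t)[j] = x (k+j) := by
    intro j hj
    rw [List.getElem_of_eq hk hj]
    simp
  apply List.ext_getElem (by simp)
  intro i h1 h2
  simp only [List.getElem_map, List.getElem_range]
  have hlen : s.length + i < (s++u++t).length := by simp; omega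
  have h5 := hw' (s.length+i) hlen
  rw [List.getElem_append_left (by simp; omega),
      List.getElem_append_right (by omega)] at h5
  simpa [add_assoc] using h5

lemma rep_take {A : Type*} (W : List A) (p : ℕ) (hd : W.drop p <+: W) :
    ∀ q, q * p ≤ W.length → (List.replicate q (W.take p)).flatten = List.take (q * p) W := by
  intro q
  induction q with
  | zero => simp
  | succ q ih =>
    intro h
    have hqp : q * p ≤ W.length - p := by
      have : (q+1) * p = q * p + p := by ring
      omega
    have h2 : (q + 1) * p = p + q * p := by ring
    rw [h2, List.take_add, List.replicate_succ, List.flatten_cons,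
        ih (by omega)]
    congr 1
    obtain ⟨r, hr⟩ := hd
    have : List.take (q*p) W = List.take (q*p) (List.drop p W) := by
      conv_lhs => rw [← hr]
      rw [List.take_append_of_le_length (by simpa using hqp)]
    exact this

lemma flatten_rep_mul {A : Type*} (u : List A) (k j : ℕ) :
    (List.replicate j (List.replicate k u).flatten).flatten
      = (List.replicate (j * k) u).flatten := by
  induction j with
  | zero => simp
  | succ j ih =>
    rw [List.replicate_succ, List.flatten_cons, ih,
      show (j+1)*k = k + j*k from by ring, List.replicate_add, List.flatten_append]

lemma flatten_rep_prefix {A : Type*} (u : List A) {a b : ℕ} (h : a ≤ b) :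
    (List.replicate a u).flatten <+: (List.replicate b u).flatten := by
  obtain ⟨c, rfl⟩ := Nat.exists_eq_add_of_le h
  rw [List.replicate_add, List.flatten_append]
  exact List.prefix_append _ _

lemma length_flatten_rep {A : Type*} (u : List A) (k : ℕ) :
    (List.replicate k u).flatten.length = k * u.length := by
  simp [List.length_flatten, Function.comp]

lemma prefix_mem_langX {A : Type*} (x : ℕ → A) (n : ℕ) :
    ((List.range n).map x) ∈ LangX x := by
  refine ⟨0, ?_⟩
  simp

lemma le_QfunL {A : Type*} {L : Set (List A)} {W : List A} (hW : W ∈ L) {n q : ℕ}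
    (hl : W.length = n) (hq : (List.replicate q W).flatten ∈ L) :
    (q : ℕ∞) ≤ QfunL L n :=
  le_sSup ⟨q, ⟨W, hW, hl, hq⟩, rfl⟩


set_option maxHeartbeats 1000000 in
lemma exists_big {A : Type*} {x : ℕ → A} {α : ℝ} (hα : 1 < α) {b : ℝ≥0∞} (hb : b ≠ ⊤)
    (hb1 : 1 ≤ b) (N : ℕ) :
    ∀ᶠ n : ℕ in atTop, AfunL (LangX x) α n < b →
      ∃ n', N ≤ n' ∧ ENNReal.ofReal (1/(4 * (b.toReal + 2) ^ α)) ≤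
        (QfunL (LangX x) n' : ℝ≥0∞) / (n' : ℝ≥0∞) ^ (α - 1) := by
  set B : ℝ := b.toReal with hB
  have hB1 : 1 ≤ B := by
    rw [hB, ← ENNReal.toReal_one]
    exact ENNReal.toReal_mono hb hb1
  set C : ℝ := B + 2 with hC
  have hCpos : 0 < C := by linarith
  set β : ℝ := 1 / α with hβ
  have hβpos : 0 < β := by positivity
  have hβ1 : β < 1 := by rw [hβ]; rw [div_lt_one (by linarith)]; linarith
  have hαpos : (0:ℝ) < α := by linarith
  -- eventual conditions
  have hTt : Tendsto (fun n : ℕ => ((n:ℝ)) ^ (1 - β)) atTop atTop :=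
    (tendsto_rpow_atTop (by linarith)).comp tendsto_natCast_atTop_atTop
  have hSt : Tendsto (fun n : ℕ => ((n:ℝ)) ^ β) atTop atTop :=
    (tendsto_rpow_atTop hβpos).comp tendsto_natCast_atTop_atTop
  filter_upwards [eventually_ge_atTop 1, hTt.eventually_ge_atTop (2*B),
    hTt.eventually_ge_atTop (2*C), hSt.eventually_ge_atTop (N:ℝ)]
    with n hn1 hT2B hT2C hSN hA
  set L := LangX x
  set S : ℝ := (n:ℝ) ^ β with hSdef
  set T : ℝ := (n:ℝ) ^ (1 - β) with hTdef
  have hnR : (1:ℝ) ≤ (n:ℝ) := by exact_mod_cast hn1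
  have hS1 : 1 ≤ S := by
    rw [hSdef]
    calc (1:ℝ) = 1 ^ β := (Real.one_rpow β).symm
    _ ≤ (n:ℝ) ^ β := Real.rpow_le_rpow zero_le_one hnR hβpos.le
  have hT1 : 0 < T := by rw [hTdef]; positivity
  have hST : S * T = n := by
    rw [hSdef, hTdef, ← Real.rpow_add (by linarith), add_sub_cancel, Real.rpow_one]
  -- extract witness from hA
  obtain ⟨t, ⟨w, W, hwL, hWL, hwne, hwW, hpre, hsuf, hWlen, ht⟩, htb⟩ := sInf_lt_iff.mp hA
  set m := w.length with hm
  have hm1 : 1 ≤ m := List.length_pos_iff.mpr hwne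
  have hmn : m < n := by
    rcases lt_or_eq_of_le (hWlen ▸ hpre.length_le) with h | h
    · exact h
    · exact absurd (List.IsPrefix.eq_of_length hpre (by omega)) hwW
  set p := n - m with hp
  have hp1 : 1 ≤ p := by omega
  have hpn : p ≤ n := by omega
  have hp0 : 0 < p := hp1
  -- real bound on p
  have hWw : W.length - w.length = p := by omega
  rw [hWw] at ht
  subst ht
  have hy0 : ((m:ℝ≥0∞)) ^ β ≠ 0 :=
    (ENNReal.rpow_pos (by exact_mod_cast hm1) (natCast_ne_top m)).ne'
  have hyt : ((m:ℝ≥0∞)) ^ β ≠ ⊤ :=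
    (ENNReal.rpow_lt_top_of_nonneg hβpos.le (natCast_ne_top m)).ne
  rw [show (1:ℝ)/α = β from rfl] at htb
  rw [ENNReal.div_lt_iff (Or.inl hy0) (Or.inl hyt)] at htb
  have hpreal : (p:ℝ) < B * (m:ℝ) ^ β := by
    have h1 := (ENNReal.toReal_lt_toReal (natCast_ne_top p)
      (ENNReal.mul_ne_top hb hyt)).mpr htb
    rwa [ENNReal.toReal_natCast, ENNReal.toReal_mul, ← ENNReal.toReal_rpow,
      ENNReal.toReal_natCast] at h1
  have hpS : (p:ℝ) < B * S := by
    refine lt_of_lt_of_le hpreal ?_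
    have : (m:ℝ) ^ β ≤ S := by
      rw [hSdef]
      exact Real.rpow_le_rpow (by positivity) (by exact_mod_cast hmn.le) hβpos.le
    nlinarith
  -- nat quantities
  set q := n / p with hq
  set K := ⌈S⌉₊ with hK
  set k := K / p + 1 with hk
  have hqple : q * p ≤ n := Nat.div_mul_le_self n p
  have hqpge : n < q * p + p := by
    calc n = p * q + n % p := (Nat.div_add_mod n p).symm
    _ < p * q + p := Nat.add_lt_add_left (Nat.mod_lt n hp0) _
    _ = q * p + p := by ring
  have hmqp : m ≤ q * p := by
    have h2 : m + p = n := by omega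
    have h3 : m + p ≤ q * p + p := by rw [h2]; exact hqpge.le
    exact Nat.le_of_add_le_add_right h3
  have hKkp : K < k * p := by
    calc K = p * (K / p) + K % p := (Nat.div_add_mod K p).symm
    _ < p * (K / p) + p := Nat.add_lt_add_left (Nat.mod_lt K hp0) _
    _ = (K / p + 1) * p := by ring
  have hkpK : k * p ≤ K + p := by
    have h := Nat.div_mul_le_self K p
    rw [hk, add_mul, one_mul]
    omega
  have hKle : (K:ℝ) ≤ 2 * S := by
    have := Nat.ceil_lt_add_one (by positivity : (0:ℝ) ≤ S)
    rw [← hK] at this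
    linarith
  have hSK : S ≤ (K:ℝ) := Nat.le_ceil S
  have hkpCS : ((k*p : ℕ):ℝ) ≤ C * S := by
    have h1 : ((k*p:ℕ):ℝ) ≤ (K:ℝ) + p := by exact_mod_cast hkpK
    rw [hC]; nlinarith
  have hkpS : S < ((k*p:ℕ):ℝ) := by
    have : (K:ℝ) < ((k*p:ℕ):ℝ) := by exact_mod_cast hKkp
    linarith
  have hCSn : 2 * (C * S) ≤ (n:ℝ) := by
    have := mul_le_mul_of_nonneg_right hT2C (by positivity : (0:ℝ) ≤ S)
    nlinarith [hST]
  have hn2m : (n:ℝ) ≤ 2 * m := by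
    have hmR : (m:ℝ) = (n:ℝ) - p := by
      have : ((n - p : ℕ):ℝ) = (n:ℝ) - p := by
        rw [Nat.cast_sub hpn]
      rw [show m = n - p from by omega]; exact this
    have h2 : 2 * B * S ≤ T * S := by nlinarith
    nlinarith [hST]
  have hkpn : k * p ≤ n := by
    have : ((k*p:ℕ):ℝ) ≤ (n:ℝ) := by nlinarith
    exact_mod_cast this
  have hkq : k ≤ q := by
    have h1 : (k:ℝ) * p ≤ C * S := by
      have h : ((k*p:ℕ):ℝ) ≤ C*S := hkpCS
      rwa [Nat.cast_mul] at h
    have h4 : (m:ℝ) ≤ (q:ℝ) * p := by exact_mod_cast hmqp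
    have : (k:ℝ) ≤ (q:ℝ) := by
      refine le_of_mul_le_mul_right ?_ (by positivity : (0:ℝ) < (p:ℝ))
      linarith
    exact_mod_cast this
  set j := q / k with hj
  have hk1 : 1 ≤ k := by rw [hk]; exact Nat.le_add_left 1 _
  have hj1 : 1 ≤ j := (Nat.one_le_div_iff hk1).mpr hkq
  have hjkq : j * k ≤ q := Nat.div_mul_le_self q k
  have hqjk : q < (j + 1) * k := by
    calc q = k * (q / k) + q % k := (Nat.div_add_mod q k).symm
    _ < k * (q / k) + k := Nat.add_lt_add_left (Nat.mod_lt q hk1) _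
    _ = (j + 1) * k := by ring
  have hq2jk : q ≤ 2 * j * k := by
    have h1 : (j + 1) * k ≤ (2 * j) * k := Nat.mul_le_mul_right k (by omega)
    omega
  -- language facts
  obtain ⟨v, hv⟩ := hsuf
  have hvlen : v.length = p := by
    have := congrArg List.length hv
    simp only [List.length_append] at this
    omega
  have hdrop : W.drop p = w := by rw [← hvlen, ← hv, List.drop_left]
  have hdp : W.drop p <+: W := by rw [hdrop]; exact hpre
  set u := W.take p with hu
  have hulen : u.length = p := by
    rw [hu, List.length_take, hWlen]; omega
  have hpow : ∀ a, a * p ≤ n → (List.replicate a u).flatten ∈ L := by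
    intro a ha
    have h := rep_take W p hdp a (by rw [hWlen]; exact ha)
    rw [hu, h]
    exact langX_infix hWL (List.take_prefix _ _).isInfix
  have hQ : ((j:ℕ) : ℕ∞) ≤ QfunL L (k * p) := by
    refine le_QfunL (hpow k hkpn) ?_ ?_
    · rw [length_flatten_rep, hulen]
    · rw [flatten_rep_mul]
      exact hpow (j * k) (by calc j * k * p ≤ q * p := Nat.mul_le_mul_right p hjkq
        _ ≤ n := hqple)
  -- final bound
  refine ⟨k * p, ?_, ?_⟩
  · have : (N:ℝ) < ((k*p:ℕ):ℝ) := lt_of_le_of_lt hSN hkpS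
    exact_mod_cast this.le
  set n' := k * p with hn'
  have hn'1 : 1 ≤ n' := Nat.mul_pos hk1 hp1
  have hn'R : (0:ℝ) < (n':ℝ) := by exact_mod_cast hn'1
  have hd0 : ((n':ℝ≥0∞)) ^ (α - 1) ≠ 0 :=
    (ENNReal.rpow_pos (by exact_mod_cast hn'1) (natCast_ne_top n')).ne'
  have hdt : ((n':ℝ≥0∞)) ^ (α - 1) ≠ ⊤ :=
    (ENNReal.rpow_lt_top_of_nonneg (by linarith) (natCast_ne_top n')).ne
  have hjQ : ((j:ℕ) : ℝ≥0∞) ≤ (QfunL L n' : ℝ≥0∞) := by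
    rw [← ENat.toENNReal_coe]
    exact ENat.toENNReal_le.mpr hQ
  refine le_trans ?_ (ENNReal.div_le_div_right hjQ _)
  rw [ENNReal.le_div_iff_mul_le (Or.inl hd0) (Or.inl hdt)]
  have hrw : ((n':ℝ≥0∞)) ^ (α - 1) = ENNReal.ofReal ((n':ℝ) ^ (α - 1)) := by
    rw [← ENNReal.ofReal_natCast, ENNReal.ofReal_rpow_of_pos hn'R]
  rw [hrw, ← ENNReal.ofReal_mul (by positivity)]
  rw [← ENNReal.ofReal_natCast j]
  apply ENNReal.ofReal_le_ofReal
  -- real inequality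
  set D : ℝ := C ^ (α - 1) with hD
  have hDpos : 0 < D := Real.rpow_pos_of_pos hCpos _
  have hCα : C ^ α = D * C := by
    rw [hD, ← Real.rpow_add_one (ne_of_gt hCpos) (α - 1), sub_add_cancel]
  have step1 : (n':ℝ) ^ (α - 1) ≤ D * T := by
    have h1 : (n':ℝ) ^ (α - 1) ≤ (C * S) ^ (α - 1) :=
      Real.rpow_le_rpow (by positivity) hkpCS (by linarith)
    have h2 : (C * S) ^ (α - 1) = D * S ^ (α - 1) := by
      rw [Real.mul_rpow hCpos.le (by positivity), hD]
    have h3 : S ^ (α - 1) = T := by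
      rw [hSdef, hTdef, ← Real.rpow_mul (by positivity)]
      congr 1
      rw [hβ]
      field_simp
    rw [h2, h3] at h1
    exact h1
  have step2 : T ≤ 4 * C * (j:ℝ) := by
    have hqR : (q:ℝ) ≤ 2 * j * k := by exact_mod_cast hq2jk
    have hmqpR : (m:ℝ) ≤ (q:ℝ) * p := by exact_mod_cast hmqp
    have hkpR : (k:ℝ) * p ≤ C * S := by
      have h : ((k*p:ℕ):ℝ) ≤ C*S := hkpCS
      rwa [Nat.cast_mul] at h
    have hST2 : S * T ≤ 4 * (j:ℝ) * (C * S) := by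
      have c1 : S * T = (n:ℝ) := hST
      have c2 : (q:ℝ) * p ≤ 2 * j * ((k:ℝ) * p) := by
        calc (q:ℝ) * p ≤ (2*(j:ℝ)*(k:ℝ)) * p :=
              mul_le_mul_of_nonneg_right hqR (by positivity)
        _ = 2 * j * ((k:ℝ) * p) := by ring
      have c3 : 2 * (j:ℝ) * ((k:ℝ) * p) ≤ 2 * j * (C * S) :=
        mul_le_mul_of_nonneg_left hkpR (by positivity)
      linarith
    have hS0 : (0:ℝ) < S := by linarith
    nlinarith [hST2, hS0]
  calc (1 / (4 * C ^ α)) * (n':ℝ) ^ (α - 1)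
      ≤ (1 / (4 * C ^ α)) * (D * T) := by
        apply mul_le_mul_of_nonneg_left step1 (by positivity)
    _ ≤ (1 / (4 * C ^ α)) * (D * (4 * C * j)) := by
        apply mul_le_mul_of_nonneg_left ?_ (by positivity)
        exact mul_le_mul_of_nonneg_left step2 hDpos.le
    _ = (j:ℝ) := by
        rw [hCα]
        field_simp


/-- If `Ω(x)` is `α`-repulsive (`0 < ℓ_α < ∞`) for `α ≥ 1`, then
`Q_α = limsup Q(n)/n^(α-1) > 0`. -/
theorem Qalpha_pos_of_repulsive
    {A : Type*} [Finite A] (x : ℕ → A) (α : ℝ) (hα : 1 ≤ α)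
    (hrep : lalpha (LangX x) α ≠ 0 ∧ lalpha (LangX x) α ≠ ⊤) :
    Qalpha (LangX x) α ≠ 0 := by
  obtain ⟨h0, htop⟩ := hrep
  intro hQ0
  rcases eq_or_lt_of_le hα with h1 | h1
  · -- α = 1
    have hall : ∀ n : ℕ,
        (1:ℝ≥0∞) ≤ (QfunL (LangX x) n : ℝ≥0∞) / (n : ℝ≥0∞) ^ (α - 1) := by
      intro n
      have hW : ((List.range n).map x) ∈ LangX x := prefix_mem_langX x n
      have hQ : ((1:ℕ) : ℕ∞) ≤ QfunL (LangX x) n :=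
        le_QfunL hW (by simp) (by simpa using hW)
      have h2 : ((1:ℕ) : ℝ≥0∞) ≤ (QfunL (LangX x) n : ℝ≥0∞) := by
        rw [← ENat.toENNReal_coe]; exact ENat.toENNReal_le.mpr hQ
      rw [← h1, sub_self, ENNReal.rpow_zero]
      simpa using h2
    have hlt : Qalpha (LangX x) α < 1 := by rw [hQ0]; exact zero_lt_one
    have hev : ∀ᶠ n : ℕ in atTop,
        (QfunL (LangX x) n : ℝ≥0∞) / (n : ℝ≥0∞) ^ (α - 1) < 1 :=
      eventually_lt_of_limsup_lt hlt
    obtain ⟨n, hn⟩ := hev.exists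
    exact absurd (hall n) (not_le.mpr hn)
  · -- α > 1
    set b := lalpha (LangX x) α + 1 with hbdef
    have hb : b ≠ ⊤ := by
      rw [hbdef]; exact ENNReal.add_ne_top.mpr ⟨htop, ENNReal.one_ne_top⟩
    have hb1 : 1 ≤ b := le_add_self
    have hlt : lalpha (LangX x) α < b := ENNReal.lt_add_right htop one_ne_zero
    have hfreq : ∃ᶠ n : ℕ in atTop, AfunL (LangX x) α n < b :=
      frequently_lt_of_liminf_lt (by isBoundedDefault) hlt
    set c := ENNReal.ofReal (1/(4 * (b.toReal + 2) ^ α)) with hc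
    have hcpos : 0 < c := by
      rw [hc]
      apply ENNReal.ofReal_pos.mpr
      have : (0:ℝ) < (b.toReal + 2) ^ α := Real.rpow_pos_of_pos (by positivity) α
      positivity
    have hltc : Qalpha (LangX x) α < c := by rw [hQ0]; exact hcpos
    have hev : ∀ᶠ n : ℕ in atTop,
        (QfunL (LangX x) n : ℝ≥0∞) / (n : ℝ≥0∞) ^ (α - 1) < c :=
      eventually_lt_of_limsup_lt hltc
    rw [eventually_atTop] at hev
    obtain ⟨N, hN⟩ := hev
    obtain ⟨n, hAn, himp⟩ := (hfreq.and_eventually (exists_big h1 hb hb1 N)).exists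
    obtain ⟨n', hn'N, hn'c⟩ := himp hAn
    exact absurd (hN n' hn'N) (not_lt.mpr hn'c)
end

section
/- Every l-Grigorchuk subshift is minimal; equivalently, the word η_l is uniformly recurrent. -/
open Filter ENNReal

/-- The four-letter alphabet `{a, x, y, z}` of the Grigorchuk subshift. -/
inductive GW : Type
  | a : GW
  | x : GW
  | y : GW
  | z : GW
  deriving DecidableEq

instance : Fintype GW :=
  ⟨{GW.a, GW.x, GW.y, GW.z}, fun c => by cases c <;> simp⟩

instance : TopologicalSpace GW := ⊥
instance : DiscreteTopology GW := ⟨rfl⟩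
/-- The substitution `τ_b` on letters: `a ↦ (a, b, a)`, fixing the other letters. -/
def tauL (b : GW) : GW → List GW
  | GW.a => [GW.a, b, GW.a]
  | c => [c]

/-- The substitution `τ_b` on words (monoid homomorphism). -/
def tauW (b : GW) (w : List GW) : List GW := w.flatMap (tauL b)

/-- For a sequence `l` (0-indexed: `l i` is `l_{i+1}` of the paper), `Nblk l j` is
the index of the block containing position `j`, i.e. the unique `n` with
`l 0 + ⋯ + l (n-1) ≤ j < l 0 + ⋯ + l n`;  this is `N(j) - 1` in the paper. -/
noncomputable def Nblk (l : ℕ → ℕ) (j : ℕ) : ℕ :=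
  sInf {n : ℕ | j < ∑ i ∈ Finset.range (n + 1), l i}

/-- `q(j)` of the paper: `j` minus the sum of the lengths of the complete blocks
before position `j`. -/
noncomputable def qrem (l : ℕ → ℕ) (j : ℕ) : ℕ :=
  j - ∑ i ∈ Finset.range (Nblk l j), l i

/-- The letter inserted at step `j + 1`: the blocks use `x, y, z` cyclically. -/
noncomputable def letterAt (l : ℕ → ℕ) (j : ℕ) : GW :=
  match (Nblk l j) % 3 with
  | 0 => GW.x
  | 1 => GW.y
  | _ => GW.z

/-- `gword l j = τ^{(j)}(a)`, via the recursion
`τ^{(j+1)}(a) = τ^{(j)}(a) β τ^{(j)}(a)` with `β = letterAt l j`. -/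
noncomputable def gword (l : ℕ → ℕ) : ℕ → List GW
  | 0 => [GW.a]
  | j + 1 => gword l j ++ letterAt l j :: gword l j

/-- The `l`-Grigorchuk word `η_l`: the unique infinite word having every
`τ^{(j)}(a)` as a prefix. -/
noncomputable def etaG (l : ℕ → ℕ) (n : ℕ) : GW :=
  (gword l (n + 1)).getD n GW.a

/-- The language of the `l`-Grigorchuk subshift: all factors of `η_l`. -/
noncomputable def LangG (l : ℕ → ℕ) : Set (List GW) := LangX (etaG l)

/-- The prefix of `η_l` of length `k`. -/
noncomputable def prefEta (l : ℕ → ℕ) (k : ℕ) : List GW :=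
  (List.range k).map (etaG l)

/- `η` is a Toeplitz word. Since `τ^{(j+1)}(a) = τ^{(j)}(a) β τ^{(j)}(a)` and
`|τ^{(j)}(a)| = 2^(j+1) - 1`, the word `η` agrees with `τ^{(j)}(a)` on every window
`[m 2^(j+1), (m+1) 2^(j+1) - 1)`. A factor `w` occurring at position `k` therefore recurs at
`k + m 2^(j+1)` for all `m` once `k + |w| < 2^(j+1)`, so `η` is uniformly recurrent, and a uniformly
recurrent word lies in the orbit closure of every point of its own orbit closure. -/

section Subshift

variable {A : Type*}

lemma shft_iterate_apply (p : ℕ) (y : ℕ → A) (n : ℕ) : shft^[p] y n = y (n + p) := by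
  induction p generalizing y with
  | zero => rfl
  | succ p ih =>
    rw [Function.iterate_succ_apply, ih (shft y)]
    exact congrArg y (by omega)

variable [TopologicalSpace A]

lemma continuous_shft : Continuous (shft : (ℕ → A) → ℕ → A) :=
  continuous_pi fun n => continuous_apply (n + 1)

lemma iterate_shft_mem_omegaOf {x y : ℕ → A} (hy : y ∈ OmegaOf x) (p : ℕ) :
    shft^[p] y ∈ OmegaOf x := by
  have h_orbit : Set.MapsTo shft^[p] {y' | ∃ k, y' = shft^[k] x} {y' | ∃ k, y' = shft^[k] x} := by
    rintro _ ⟨q, rfl⟩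
    exact ⟨p + q, (Function.iterate_add_apply _ _ _ _).symm⟩
  exact h_orbit.closure (continuous_shft.iterate p) hy

lemma omegaOf_subset_of_mem {x y : ℕ → A} (hy : y ∈ OmegaOf x) : OmegaOf y ⊆ OmegaOf x := by
  refine closure_minimal ?_ isClosed_closure
  rintro _ ⟨q, rfl⟩
  exact iterate_shft_mem_omegaOf hy q

lemma mem_omegaOf_of_forall_exists_eq {x y : ℕ → A}
    (h : ∀ L, ∃ p, ∀ i < L, y (p + i) = x i) : x ∈ OmegaOf y := by
  refine mem_closure_iff.mpr fun o ho hxo => ?_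
  obtain ⟨I, u, hu, hsub⟩ := isOpen_pi_iff.mp ho x hxo
  obtain ⟨p, hp⟩ := h (I.sup id + 1)
  refine ⟨shft^[p] y, hsub fun i hi => ?_, p, rfl⟩
  rw [shft_iterate_apply, add_comm,
    hp i (Nat.lt_succ_of_le (Finset.le_sup (f := id) hi))]
  exact (hu i hi).2

lemma exists_eq_of_mem_omegaOf [DiscreteTopology A] {x y : ℕ → A} (hy : y ∈ OmegaOf x) (L : ℕ) :
    ∃ q, ∀ i < L, y i = x (q + i) := by
  have h_open : IsOpen {z : ℕ → A | ∀ i < L, z i = y i} := by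
    simp only [Set.ofPred_forall]
    exact (Set.finite_lt_nat L).isOpen_biInter fun i _ =>
      (continuous_apply (A := fun _ => A) i).isOpen_preimage {y i} (isOpen_discrete _)
  obtain ⟨z, hz, q, rfl⟩ := mem_closure_iff.mp hy _ h_open fun i _ => rfl
  exact ⟨q, fun i hi => by rw [← hz i hi, shft_iterate_apply, add_comm]⟩

end Subshift

def UniformlyRecurrent {A : Type*} (x : ℕ → A) : Prop :=
  ∀ w ∈ LangX x, ∃ B : ℕ, ∀ n : ℕ, ∃ k : ℕ, n ≤ k ∧ k ≤ n + B ∧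
    w = (List.range w.length).map fun i => x (k + i)

namespace UniformlyRecurrent

variable {A : Type*} [TopologicalSpace A] [DiscreteTopology A] {x y : ℕ → A}

lemma mem_omegaOf (hx : UniformlyRecurrent x) (hy : y ∈ OmegaOf x) : x ∈ OmegaOf y := by
  refine mem_omegaOf_of_forall_exists_eq fun L => ?_
  obtain ⟨B, hB⟩ := hx ((List.range L).map x) ⟨0, by simp⟩
  obtain ⟨q, hq⟩ := exists_eq_of_mem_omegaOf hy (L + B)
  obtain ⟨k, hqk, hkq, hk⟩ := hB q
  simp only [List.length_map, List.length_range, List.map_inj_left, List.mem_range] at hk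
  refine ⟨k - q, fun i hi => ?_⟩
  rw [hq _ (by omega), show q + (k - q + i) = k + i by omega, hk i hi]

lemma omegaOf_eq (hx : UniformlyRecurrent x) (hy : y ∈ OmegaOf x) : OmegaOf y = OmegaOf x :=
  (omegaOf_subset_of_mem hy).antisymm (omegaOf_subset_of_mem (hx.mem_omegaOf hy))

end UniformlyRecurrent

lemma uniformlyRecurrent_of_periodic_prefixes {A : Type*} {x : ℕ → A}
    (h : ∀ N, ∃ P > 0, ∀ m, ∀ i < N, x (m * P + i) = x i) : UniformlyRecurrent x := by
  rintro w ⟨k, hw⟩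
  obtain ⟨P, hP, hper⟩ := h (k + w.length)
  refine ⟨P + k, fun n => ⟨(n / P + 1) * P + k, ?_, ?_, ?_⟩⟩
  · have := Nat.lt_div_mul_add (a := n) hP
    nlinarith
  · have := Nat.div_mul_le_self n P
    nlinarith
  · refine hw.trans (List.map_congr_left fun i hi => ?_)
    rw [List.mem_range] at hi
    rw [add_assoc, hper _ _ (by omega)]

section Grigorchuk

variable (l : ℕ → ℕ)

lemma length_gword_add_one (j : ℕ) : (gword l j).length + 1 = 2 ^ (j + 1) := by
  induction j with
  | zero => rfl
  | succ j ih =>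
    simp only [gword, List.length_append, List.length_cons, pow_succ 2 (j + 1)]
    omega

lemma gword_prefix_of_le {j j' : ℕ} (h : j ≤ j') : gword l j <+: gword l j' := by
  induction j', h using Nat.le_induction with
  | base => exact List.prefix_refl _
  | succ n _ ih => exact ih.trans (List.prefix_append _ _)

lemma etaG_eq_getD_gword {j n : ℕ} (hn : n < (gword l j).length) :
    etaG l n = (gword l j).getD n GW.a := by
  have hn' : n < (gword l (n + 1)).length := by
    have := length_gword_add_one l (n + 1)
    have := Nat.lt_two_pow_self (n := n + 1 + 1)
    omega
  rcases le_total j (n + 1) with h | h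
  · obtain ⟨t, ht⟩ := gword_prefix_of_le l h
    rw [etaG, ← ht, List.getD_append _ _ _ _ hn]
  · obtain ⟨t, ht⟩ := gword_prefix_of_le l h
    rw [etaG, ← ht, List.getD_append _ _ _ _ hn']

lemma etaG_add_two_pow {i j : ℕ} (hi : i + 1 < 2 ^ (j + 1)) :
    etaG l (i + 2 ^ (j + 1)) = etaG l i := by
  have hj := length_gword_add_one l j
  have hj' := length_gword_add_one l (j + 1)
  rw [pow_succ 2 (j + 1)] at hj'
  rw [etaG_eq_getD_gword l (j := j + 1) (by omega), etaG_eq_getD_gword l (j := j) (by omega),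
    gword, show i + 2 ^ (j + 1) = (gword l j).length + (i + 1) by omega,
    List.getD_append_right _ _ _ _ (by omega), Nat.add_sub_cancel_left, List.getD_cons_succ]

lemma etaG_mul_two_pow_add {i j : ℕ} (hi : i + 1 < 2 ^ (j + 1)) (m : ℕ) :
    etaG l (m * 2 ^ (j + 1) + i) = etaG l i := by
  suffices h : ∀ d, ∀ m < 2 ^ d, etaG l (m * 2 ^ (j + 1) + i) = etaG l i from
    h m m Nat.lt_two_pow_self
  intro d
  induction d with
  | zero => simp
  | succ d ih =>
    intro m hm
    rcases lt_or_ge m (2 ^ d) with hm' | hm'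
    · exact ih m hm'
    · obtain ⟨m', rfl⟩ := Nat.exists_eq_add_of_le hm'
      have hm'_lt : m' < 2 ^ d := by rw [pow_succ] at hm; omega
      have h_pos : m' * 2 ^ (j + 1) + i + 1 < 2 ^ (j + d + 1) := by
        have := Nat.mul_le_mul_right (2 ^ (j + 1)) (Nat.succ_le_of_lt hm'_lt)
        rw [show j + d + 1 = d + (j + 1) by omega, pow_add 2 d (j + 1)]
        rw [Nat.succ_mul] at this
        omega
      rw [show (2 ^ d + m') * 2 ^ (j + 1) + i = m' * 2 ^ (j + 1) + i + 2 ^ (j + d + 1) by ring,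
        etaG_add_two_pow l h_pos, ih m' hm'_lt]

lemma etaG_uniformlyRecurrent : UniformlyRecurrent (etaG l) :=
  uniformlyRecurrent_of_periodic_prefixes fun N =>
    ⟨2 ^ (N + 1), by positivity, fun m i hi =>
      etaG_mul_two_pow_add l (by have := Nat.lt_two_pow_self (n := N + 1); omega) m⟩

end Grigorchuk

theorem grigorchuk_minimal_general (l : ℕ → ℕ) :
    (∀ y ∈ OmegaOf (etaG l), OmegaOf y = OmegaOf (etaG l)) ∧
    (∀ w ∈ LangG l, ∃ B : ℕ, ∀ n : ℕ, ∃ k : ℕ, n ≤ k ∧ k ≤ n + B ∧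
      w = (List.range w.length).map fun i => etaG l (k + i)) :=
  ⟨fun _ hy => (etaG_uniformlyRecurrent l).omegaOf_eq hy, etaG_uniformlyRecurrent l⟩

/-- Proposition 4.5: every `l`-Grigorchuk subshift is minimal;
equivalently, `η_l` is uniformly recurrent. -/
theorem grigorchuk_minimal (l : ℕ → ℕ) (hl : ∀ i, 0 < l i) :
    (∀ y ∈ OmegaOf (etaG l), OmegaOf y = OmegaOf (etaG l)) ∧
    (∀ w ∈ LangG l, ∃ B : ℕ, ∀ n : ℕ, ∃ k : ℕ, n ≤ k ∧ k ≤ n + B ∧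
      w = (List.range w.length).map fun i => etaG l (k + i)) :=
  grigorchuk_minimal_general l
end
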